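/- arXiv:1804.04304 — 2 statements merged into one kernel-verified Lean document; each statement's English description precedes it below -/
import Mathlib

section
/- Let Ω ⊂⊂ ℂⁿ be a pseudoconvex domain with smooth boundary, and let Π be the set of all strongly pseudoconvex boundary points of Ω, i.e., the points p ∈ ∂Ω at which L_ρ(X,X)(p) > 0 for every nonzero X ∈ ℂⁿ with Σ_j X_j·(∂ρ/∂z_j)(p) = 0. Then for any defining function ρ of Ω and any η₂ ∈ (1,∞) there exists a neighborhood V of Π in ℂⁿ such that ρ^{η₂} is strictly plurisubharmonic on (ℂⁿ ∖ cl(Ω)) ∩ V. -/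
/-!
Where `ρ > 0`, the chain rule for the Levi form gives
`L_{ρ^η}(X,X) = η ρ^{η-2} ((η-1)|Xρ|² + ρ L_ρ(X,X))`. Near a strongly pseudoconvex boundary point
`p` the bracket is positive for every unit vector `X` at points with `ρ > 0`: if `Xρ(p) ≠ 0` the
first term is positive near `(p, X)` because `ρ(p) = 0`, and otherwise `L_ρ(X,X)(p) > 0`.
Compactness of the unit sphere makes this uniform in `X`, homogeneity extends it to all `X ≠ 0`,
and outside `cl Ω` near `∂Ω` one has `ρ > 0` because `dρ ≠ 0` there.
-/

noncomputable section

open Complex Topology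
open scoped ENNReal

/-- Wirtinger derivative `∂f/∂z_j`. -/
def dz {n : ℕ} (j : Fin n) (f : (Fin n → ℂ) → ℂ) (z : Fin n → ℂ) : ℂ :=
  (fderiv ℝ f z (Pi.single j 1) - Complex.I * fderiv ℝ f z (Pi.single j Complex.I)) / 2

/-- Wirtinger derivative `∂f/∂z̄_j`. -/
def dzbar {n : ℕ} (j : Fin n) (f : (Fin n → ℂ) → ℂ) (z : Fin n → ℂ) : ℂ :=
  (fderiv ℝ f z (Pi.single j 1) + Complex.I * fderiv ℝ f z (Pi.single j Complex.I)) / 2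

/-- Complexification of a real-valued function. -/
def cplx {n : ℕ} (ρ : (Fin n → ℂ) → ℝ) : (Fin n → ℂ) → ℂ := fun z => (ρ z : ℂ)

/-- The Levi form `L_ρ(X,Y)(z) = Σ_{j,k} ∂²ρ/∂z_j∂z̄_k (z) X_j conj(Y_k)`. -/
def levi {n : ℕ} (ρ : (Fin n → ℂ) → ℝ) (X Y : Fin n → ℂ) (z : Fin n → ℂ) : ℂ :=
  ∑ j, ∑ k, dz j (fun w => dzbar k (cplx ρ) w) z * X j * (starRingEnd ℂ) (Y k)

/-- `Xf = Σ_j X_j ∂f/∂z_j` for a (1,0) vector `X`. -/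
def dirDeriv {n : ℕ} (X : Fin n → ℂ) (f : (Fin n → ℂ) → ℂ) (z : Fin n → ℂ) : ℂ :=
  ∑ j, X j * dz j f z

/-- `X̄f = Σ_j conj(X_j) ∂f/∂z̄_j`. -/
def dirDerivBar {n : ℕ} (X : Fin n → ℂ) (f : (Fin n → ℂ) → ℂ) (z : Fin n → ℂ) : ℂ :=
  ∑ j, (starRingEnd ℂ) (X j) * dzbar j f z

/-- Derivative of `f` along the (1,0) vector field `X`. -/
def fieldDeriv {n : ℕ} (X : (Fin n → ℂ) → (Fin n → ℂ)) (f : (Fin n → ℂ) → ℂ)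
    (z : Fin n → ℂ) : ℂ :=
  dirDeriv (X z) f z

/-- Euclidean norm of the real gradient of `ρ`. -/
def gradNorm {n : ℕ} (ρ : (Fin n → ℂ) → ℝ) (z : Fin n → ℂ) : ℝ :=
  Real.sqrt (∑ j, ((fderiv ℝ ρ z (Pi.single j 1)) ^ 2 +
    (fderiv ℝ ρ z (Pi.single j Complex.I)) ^ 2))

/-- The complex normal field `N_ρ`. -/
def nfield {n : ℕ} (ρ : (Fin n → ℂ) → ℝ) (z : Fin n → ℂ) : Fin n → ℂ := fun j =>
  ((Real.sqrt (∑ k, Complex.normSq (dz k (cplx ρ) z)) : ℝ) : ℂ)⁻¹ * dzbar j (cplx ρ) z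

/-- Squared Euclidean norm of a vector in ℂⁿ. -/
def enormSq {n : ℕ} (X : Fin n → ℂ) : ℝ := ∑ j, Complex.normSq (X j)

/-- `f` is strictly plurisubharmonic on `S`. -/
def StrictPSHOn {n : ℕ} (f : (Fin n → ℂ) → ℝ) (S : Set (Fin n → ℂ)) : Prop :=
  ∀ z ∈ S, ∀ X : Fin n → ℂ, X ≠ 0 → 0 < (levi f X X z).re

/-- `ρ` is a (global smooth) defining function of `Ω` on the neighborhood `V` of `cl Ω`. -/
structure IsDefFn {n : ℕ} (Ω V : Set (Fin n → ℂ)) (ρ : (Fin n → ℂ) → ℝ) : Prop where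
  isOpen : IsOpen V
  subset : closure Ω ⊆ V
  smooth : ContDiffOn ℝ (⊤ : ℕ∞) ρ V
  eq : Ω = {z ∈ V | ρ z < 0}
  grad_ne : ∀ z ∈ frontier Ω, fderiv ℝ ρ z ≠ 0

/-- The Levi form of `ρ` is positive semidefinite on complex tangent vectors at `z`. -/
def LeviPseudoconvexAt {n : ℕ} (ρ : (Fin n → ℂ) → ℝ) (z : Fin n → ℂ) : Prop :=
  ∀ X : Fin n → ℂ, dirDeriv X (cplx ρ) z = 0 → 0 ≤ (levi ρ X X z).re

/-- `Ω` is a (smoothly bounded, Levi) pseudoconvex domain. -/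
def IsPseudoconvex {n : ℕ} (Ω : Set (Fin n → ℂ)) : Prop :=
  ∃ (V : Set (Fin n → ℂ)) (ρ : (Fin n → ℂ) → ℝ), IsDefFn Ω V ρ ∧
    ∀ p ∈ frontier Ω, LeviPseudoconvexAt ρ p

/-- The set of Steinness exponents of `ρ`. -/
def steinExpSet {n : ℕ} (Ω : Set (Fin n → ℂ)) (ρ : (Fin n → ℂ) → ℝ) : Set ℝ :=
  {η : ℝ | 1 < η ∧ ∃ W : Set (Fin n → ℂ), IsOpen W ∧ frontier Ω ⊆ W ∧
    StrictPSHOn (fun z => ρ z ^ η) ((closure Ω)ᶜ ∩ W)}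

/-- The Steinness exponent `η̃_ρ` of a defining function `ρ` (`∞` if none exists). -/
def steinExp {n : ℕ} (Ω : Set (Fin n → ℂ)) (ρ : (Fin n → ℂ) → ℝ) : ℝ≥0∞ :=
  sInf (ENNReal.ofReal '' steinExpSet Ω ρ)

/-- The Steinness index `S(Ω)`. -/
def steinIndex {n : ℕ} (Ω : Set (Fin n → ℂ)) : ℝ≥0∞ :=
  ⨅ (V : Set (Fin n → ℂ)) (ρ : (Fin n → ℂ) → ℝ) (_ : IsDefFn Ω V ρ), steinExp Ω ρ

/-- The set of Diederich–Fornæss exponents of `ρ`. -/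
def dfExpSet {n : ℕ} (Ω : Set (Fin n → ℂ)) (ρ : (Fin n → ℂ) → ℝ) : Set ℝ :=
  {η : ℝ | 0 < η ∧ η < 1 ∧ StrictPSHOn (fun z => -((-ρ z) ^ η)) Ω}

/-- The Diederich–Fornæss exponent of `ρ` (`0` if no exponent exists). -/
def dfExp {n : ℕ} (Ω : Set (Fin n → ℂ)) (ρ : (Fin n → ℂ) → ℝ) : ℝ :=
  sSup (insert 0 (dfExpSet Ω ρ))

/-- The Diederich–Fornæss index `DF(Ω)`. -/
def dfIndex {n : ℕ} (Ω : Set (Fin n → ℂ)) : ℝ :=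
  sSup {t : ℝ | ∃ V ρ, IsDefFn Ω V ρ ∧ t = dfExp Ω ρ}

/-- `L` is a smooth (1,0) tangent vector field for `ρ` on `A`. -/
def IsTangentField {n : ℕ} (ρ : (Fin n → ℂ) → ℝ) (L : (Fin n → ℂ) → (Fin n → ℂ))
    (A : Set (Fin n → ℂ)) : Prop :=
  ContDiffOn ℝ (⊤ : ℕ∞) L A ∧ ∀ z ∈ A, dirDeriv (L z) (cplx ρ) z = 0

/-- The key differential inequality
`(1/(η₂−1))|L_ρ(L,N)|²/‖∇ρ‖² − (1/2)(N L_ρ(L,L))/‖∇ρ‖ ≤ 0` at `p`. -/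
def keyIneqAt {n : ℕ} (ρ : (Fin n → ℂ) → ℝ) (L : (Fin n → ℂ) → (Fin n → ℂ)) (η₂ : ℝ)
    (p : Fin n → ℂ) : Prop :=
  1 / (η₂ - 1) * Complex.normSq (levi ρ (L p) (nfield ρ p) p) / (gradNorm ρ p) ^ 2 -
    1 / 2 * (fieldDeriv (nfield ρ) (fun w => levi ρ (L w) (L w) w) p).re / gradNorm ρ p ≤ 0

/-- The strict version of the key differential inequality. -/
def strictKeyIneqAt {n : ℕ} (ρ : (Fin n → ℂ) → ℝ) (L : (Fin n → ℂ) → (Fin n → ℂ)) (η₂ : ℝ)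
    (p : Fin n → ℂ) : Prop :=
  1 / (η₂ - 1) * Complex.normSq (levi ρ (L p) (nfield ρ p) p) / (gradNorm ρ p) ^ 2 -
    1 / 2 * (fieldDeriv (nfield ρ) (fun w => levi ρ (L w) (L w) w) p).re / gradNorm ρ p < 0

/-- `cl Ω` has a strong Stein neighborhood basis. -/
def HasStrongSteinBasis {n : ℕ} (Ω : Set (Fin n → ℂ)) : Prop :=
  ∃ (V : Set (Fin n → ℂ)) (ρ : (Fin n → ℂ) → ℝ), IsDefFn Ω V ρ ∧ ∃ ε₀ : ℝ, 0 < ε₀ ∧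
    (∀ z ∈ V, 0 ≤ ρ z → ρ z < ε₀ → fderiv ℝ ρ z ≠ 0) ∧
    ∀ ε : ℝ, 0 ≤ ε → ε < ε₀ → ∀ z ∈ V, ρ z = ε → LeviPseudoconvexAt ρ z

/-- Vanishing order at `0` of a holomorphic function `ℂ → ℂ` (`∞` if all derivatives vanish). -/
def orderC (h : ℂ → ℂ) : ℕ∞ :=
  sInf ((fun k : ℕ => (k : ℕ∞)) '' {k : ℕ | iteratedDeriv k h 0 ≠ 0})

/-- Vanishing order at `0` of a real-valued function on `ℂ`. -/
def orderR (g : ℂ → ℝ) : ℕ∞ :=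
  sInf ((fun k : ℕ => (k : ℕ∞)) '' {k : ℕ | iteratedFDeriv ℝ k g 0 ≠ 0})

/-- `ν(γ)`: minimal vanishing order at `0` of the components of `γ − p`. -/
def curveOrder {n : ℕ} (γ : ℂ → Fin n → ℂ) (p : Fin n → ℂ) : ℕ∞ :=
  ⨅ j, orderC (fun t => γ t j - p j)

/-- `p` is a boundary point of finite D'Angelo 1-type (w.r.t. the defining function `ρ`). -/
def FiniteTypePt {n : ℕ} (ρ : (Fin n → ℂ) → ℝ) (p : Fin n → ℂ) : Prop :=
  ∃ M : ℕ, ∀ γ : ℂ → Fin n → ℂ, (∀ j, AnalyticAt ℂ (fun t => γ t j) 0) → γ 0 = p →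
    ¬ (∀ᶠ t in nhds (0 : ℂ), γ t = p) →
    orderR (fun t => ρ (γ t)) ≤ (M : ℕ∞) * curveOrder γ p

open ComplexConjugate

variable {n : ℕ}

section Wirtinger

variable {f : (Fin n → ℂ) → ℝ} {z : Fin n → ℂ}

lemma fderiv_cplx_apply (hf : DifferentiableAt ℝ f z) (v : Fin n → ℂ) :
    fderiv ℝ (cplx f) z v = fderiv ℝ f z v :=
  congrArg (· v) (ofRealCLM.hasFDerivAt.comp z hf.hasFDerivAt).fderiv

lemma dz_cplx (hf : DifferentiableAt ℝ f z) (j : Fin n) :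
    dz j (cplx f) z = (fderiv ℝ f z (Pi.single j 1) - I * fderiv ℝ f z (Pi.single j I)) / 2 := by
  simp only [dz, fderiv_cplx_apply hf]

lemma dzbar_cplx (hf : DifferentiableAt ℝ f z) (j : Fin n) :
    dzbar j (cplx f) z = (fderiv ℝ f z (Pi.single j 1) + I * fderiv ℝ f z (Pi.single j I)) / 2 := by
  simp only [dzbar, fderiv_cplx_apply hf]

lemma dzbar_cplx_eq_conj_dz (hf : DifferentiableAt ℝ f z) (j : Fin n) :
    dzbar j (cplx f) z = conj (dz j (cplx f) z) := by
  simp [dz_cplx hf, dzbar_cplx hf, map_ofNat]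

lemma DifferentiableAt.cplx (hf : DifferentiableAt ℝ f z) : DifferentiableAt ℝ (cplx f) z :=
  (ofRealCLM.hasFDerivAt.comp z hf.hasFDerivAt).differentiableAt

lemma dz_cplx_comp {φ : ℝ → ℝ} {φ' : ℝ} (hφ : HasDerivAt φ φ' (f z))
    (hf : DifferentiableAt ℝ f z) (j : Fin n) :
    dz j (cplx fun w => φ (f w)) z = φ' * dz j (cplx f) z := by
  have hcomp : HasFDerivAt (fun w => φ (f w)) (φ' • fderiv ℝ f z) z :=
    hφ.comp_hasFDerivAt z hf.hasFDerivAt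
  rw [dz_cplx hcomp.differentiableAt, dz_cplx hf, hcomp.fderiv]
  simp only [smul_apply, smul_eq_mul, ofReal_mul]
  ring

lemma dzbar_cplx_comp {φ : ℝ → ℝ} {φ' : ℝ} (hφ : HasDerivAt φ φ' (f z))
    (hf : DifferentiableAt ℝ f z) (j : Fin n) :
    dzbar j (cplx fun w => φ (f w)) z = φ' * dzbar j (cplx f) z := by
  have hcomp : HasFDerivAt (fun w => φ (f w)) (φ' • fderiv ℝ f z) z :=
    hφ.comp_hasFDerivAt z hf.hasFDerivAt
  rw [dzbar_cplx hcomp.differentiableAt, dzbar_cplx hf, hcomp.fderiv]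
  simp only [smul_apply, smul_eq_mul, ofReal_mul]
  ring

lemma dz_mul {u v : (Fin n → ℂ) → ℂ} (hu : DifferentiableAt ℝ u z)
    (hv : DifferentiableAt ℝ v z) (j : Fin n) :
    dz j (fun w => u w * v w) z = dz j u z * v z + u z * dz j v z := by
  simp only [dz, fderiv_fun_mul hu hv, add_apply, smul_apply, smul_eq_mul]
  ring

lemma Filter.EventuallyEq.dz_eq {u v : (Fin n → ℂ) → ℂ} (h : u =ᶠ[𝓝 z] v) (j : Fin n) :
    dz j u z = dz j v z := by
  simp only [dz, h.fderiv_eq]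

end Wirtinger

section Smoothness

variable {z : Fin n → ℂ} {k m : WithTop ℕ∞}

lemma ContDiffAt.cplx {f : (Fin n → ℂ) → ℝ} (hf : ContDiffAt ℝ k f z) :
    ContDiffAt ℝ k (cplx f) z :=
  ofRealCLM.contDiff.contDiffAt.comp z hf

lemma ContDiffAt.dz {f : (Fin n → ℂ) → ℂ} (hf : ContDiffAt ℝ k f z) (hmk : m + 1 ≤ k)
    (j : Fin n) : ContDiffAt ℝ m (dz j f) z := by
  have hf' := hf.fderiv_right hmk
  exact ((hf'.clm_apply contDiffAt_const).sub
    (contDiffAt_const.mul (hf'.clm_apply contDiffAt_const))).div_const 2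

lemma ContDiffAt.dzbar {f : (Fin n → ℂ) → ℂ} (hf : ContDiffAt ℝ k f z) (hmk : m + 1 ≤ k)
    (j : Fin n) : ContDiffAt ℝ m (dzbar j f) z := by
  have hf' := hf.fderiv_right hmk
  exact ((hf'.clm_apply contDiffAt_const).add
    (contDiffAt_const.mul (hf'.clm_apply contDiffAt_const))).div_const 2

end Smoothness

section Levi

variable {ρ : (Fin n → ℂ) → ℝ} {z : Fin n → ℂ}

lemma dirDeriv_smul (c : ℂ) (X : Fin n → ℂ) (f : (Fin n → ℂ) → ℂ) :
    dirDeriv (c • X) f z = c * dirDeriv X f z := by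
  simp only [dirDeriv, Finset.mul_sum, Pi.smul_apply, smul_eq_mul, mul_assoc]

lemma levi_smul_smul (c : ℂ) (X : Fin n → ℂ) :
    levi ρ (c • X) (c • X) z = normSq c * levi ρ X X z := by
  simp only [levi, Finset.mul_sum, Pi.smul_apply, smul_eq_mul, map_mul, normSq_eq_conj_mul_self]
  refine Finset.sum_congr rfl fun j _ => Finset.sum_congr rfl fun k _ => ?_
  ring

lemma dirDeriv_mul_conj (X Y : Fin n → ℂ) (f : (Fin n → ℂ) → ℂ) :
    dirDeriv X f z * conj (dirDeriv Y f z) =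
      ∑ j, ∑ k, X j * dz j f z * conj (Y k * dz k f z) := by
  rw [dirDeriv, dirDeriv, map_sum, Finset.sum_mul_sum]

lemma levi_comp {φ φ' : ℝ → ℝ} {φ'' : ℝ} (hρ : ContDiffAt ℝ 2 ρ z)
    (hφ : ∀ᶠ t in 𝓝 (ρ z), HasDerivAt φ (φ' t) t) (hφ' : HasDerivAt φ' φ'' (ρ z))
    (X Y : Fin n → ℂ) :
    levi (fun w => φ (ρ w)) X Y z =
      φ'' * (dirDeriv X (cplx ρ) z * conj (dirDeriv Y (cplx ρ) z)) + φ' (ρ z) * levi ρ X Y z := by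
  have hρd : ∀ᶠ w in 𝓝 z, DifferentiableAt ℝ ρ w ∧ HasDerivAt φ (φ' (ρ w)) (ρ w) :=
    ((hρ.eventually (by simp)).and (hρ.continuousAt.eventually hφ)).mono
      fun w hw => ⟨hw.1.differentiableAt (by simp), hw.2⟩
  have hdz : ∀ j k, dz j (fun w => dzbar k (cplx fun w => φ (ρ w)) w) z =
      φ'' * dz j (cplx ρ) z * conj (dz k (cplx ρ) z) +
        φ' (ρ z) * dz j (fun w => dzbar k (cplx ρ) w) z := by
    intro j k
    have hbar : (fun w => dzbar k (cplx fun w => φ (ρ w)) w) =ᶠ[𝓝 z]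
        fun w => cplx (fun w => φ' (ρ w)) w * dzbar k (cplx ρ) w :=
      hρd.mono fun w hw => dzbar_cplx_comp hw.2 hw.1 k
    have hρz : DifferentiableAt ℝ ρ z := hρd.self_of_nhds.1
    have hφ'ρ : HasFDerivAt (fun w => φ' (ρ w)) (φ'' • fderiv ℝ ρ z) z :=
      hφ'.comp_hasFDerivAt z hρz.hasFDerivAt
    rw [hbar.dz_eq, dz_mul (hφ'ρ.differentiableAt.cplx)
      ((hρ.cplx.dzbar one_add_one_eq_two.le k).differentiableAt one_ne_zero),
      dz_cplx_comp hφ' hρz, dzbar_cplx_eq_conj_dz hρz]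
    simp only [cplx]
  simp only [levi, dirDeriv_mul_conj, Finset.mul_sum, ← Finset.sum_add_distrib, hdz, map_mul]
  refine Finset.sum_congr rfl fun j _ => Finset.sum_congr rfl fun k _ => ?_
  ring

def leviRpowFactor (ρ : (Fin n → ℂ) → ℝ) (η : ℝ) (z X : Fin n → ℂ) : ℝ :=
  (η - 1) * normSq (dirDeriv X (cplx ρ) z) + ρ z * (levi ρ X X z).re

lemma leviRpowFactor_smul (η : ℝ) (c : ℂ) (X : Fin n → ℂ) :
    leviRpowFactor ρ η z (c • X) = normSq c * leviRpowFactor ρ η z X := by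
  simp only [leviRpowFactor, dirDeriv_smul, levi_smul_smul, normSq_mul, re_ofReal_mul]
  ring

lemma levi_rpow_re (hρ : ContDiffAt ℝ 2 ρ z) (hz : 0 < ρ z) (η : ℝ) (X : Fin n → ℂ) :
    (levi (fun w => ρ w ^ η) X X z).re = η * ρ z ^ (η - 2) * leviRpowFactor ρ η z X := by
  have hφ : ∀ᶠ t in 𝓝 (ρ z), HasDerivAt (· ^ η) (η * t ^ (η - 1)) t :=
    (eventually_gt_nhds hz).mono fun t ht => Real.hasDerivAt_rpow_const (Or.inl ht.ne')
  have hφ' : HasDerivAt (fun t => η * t ^ (η - 1)) (η * ((η - 1) * ρ z ^ (η - 1 - 1))) (ρ z) :=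
    (Real.hasDerivAt_rpow_const (Or.inl hz.ne')).const_mul η
  rw [levi_comp hρ hφ hφ', mul_conj]
  simp only [leviRpowFactor, add_re, re_ofReal_mul, ofReal_re]
  rw [show η - 1 - 1 = η - 2 by ring, show η - 1 = η - 2 + 1 by ring,
    Real.rpow_add_one hz.ne']
  ring

end Levi

section Continuity

variable {p : Fin n → ℂ}

lemma continuousAt_dirDeriv {f : (Fin n → ℂ) → ℂ} (hf : ContDiffAt ℝ 1 f p)
    (X : Fin n → ℂ) :
    ContinuousAt (fun q : (Fin n → ℂ) × (Fin n → ℂ) => dirDeriv q.2 f q.1) (p, X) := by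
  have hdz : ∀ j, ContinuousAt (dz j f) p := fun j =>
    (hf.dz (zero_add 1).le j).continuousAt
  simp only [dirDeriv]
  fun_prop

lemma continuousAt_levi {ρ : (Fin n → ℂ) → ℝ} (hρ : ContDiffAt ℝ 2 ρ p)
    (X : Fin n → ℂ) :
    ContinuousAt (fun q : (Fin n → ℂ) × (Fin n → ℂ) => levi ρ q.2 q.2 q.1) (p, X) := by
  have hcoeff : ∀ j k, ContinuousAt (dz j fun w => dzbar k (cplx ρ) w) p := fun j k =>
    ((hρ.cplx.dzbar one_add_one_eq_two.le k).dz (zero_add 1).le j).continuousAt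
  simp only [levi]
  fun_prop

end Continuity

lemma mem_closure_setOf_lt_of_fderiv_ne_zero {E : Type*} [NormedAddCommGroup E]
    [NormedSpace ℝ E] {f : E → ℝ} {z : E} (hf : fderiv ℝ f z ≠ 0) :
    z ∈ closure {w | f w < f z} := by
  by_contra hz
  refine hf (IsLocalMin.fderiv_eq_zero ?_)
  filter_upwards [isClosed_closure.isOpen_compl.mem_nhds hz] with w hw
  exact not_lt.mp fun hlt => hw (subset_closure hlt)

namespace IsDefFn

variable {Ω V : Set (Fin n → ℂ)} {ρ : (Fin n → ℂ) → ℝ} {z : Fin n → ℂ}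

lemma contDiffAt (h : IsDefFn Ω V ρ) (hz : z ∈ V) (m : ℕ) : ContDiffAt ℝ m ρ z :=
  (h.smooth.contDiffAt (h.isOpen.mem_nhds hz)).of_le (by exact_mod_cast le_top)

lemma isOpen_domain (h : IsDefFn Ω V ρ) : IsOpen Ω := by
  rw [h.eq]
  exact h.smooth.continuousOn.isOpen_inter_preimage h.isOpen isOpen_Iio

lemma eq_zero_of_mem_frontier (h : IsDefFn Ω V ρ) (hz : z ∈ frontier Ω) : ρ z = 0 := by
  have hzV : z ∈ V := h.subset (frontier_subset_closure hz)
  have hρ_le : ρ z ≤ 0 := by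
    have hmem := ((h.contDiffAt hzV 0).continuousAt.continuousWithinAt (s := Ω)).mem_closure_image
      (frontier_subset_closure hz)
    refine closure_minimal ?_ isClosed_Iic hmem
    rintro _ ⟨w, hw, rfl⟩
    exact (h.eq ▸ hw : w ∈ {z ∈ V | ρ z < 0}).2.le
  have hzΩ : z ∉ Ω := h.isOpen_domain.frontier_eq ▸ hz |>.2
  by_contra hne
  exact hzΩ (h.eq ▸ ⟨hzV, lt_of_le_of_ne hρ_le hne⟩)

lemma pos_of_notMem_closure (h : IsDefFn Ω V ρ) (hzV : z ∈ V) (hzΩ : z ∉ closure Ω)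
    (hgrad : fderiv ℝ ρ z ≠ 0) : 0 < ρ z := by
  refine lt_of_not_ge fun hle => hzΩ ?_
  rcases hle.lt_or_eq with hlt | heq
  · exact subset_closure (h.eq ▸ ⟨hzV, hlt⟩)
  · have hmem := h.isOpen.inter_closure ⟨hzV, mem_closure_setOf_lt_of_fderiv_ne_zero hgrad⟩
    rw [heq] at hmem
    rw [h.eq]
    exact hmem

end IsDefFn

section StrongPseudoconvexity

variable {ρ : (Fin n → ℂ) → ℝ} {η : ℝ} {p : Fin n → ℂ}

lemma eventually_leviRpowFactor_pos (hρ : ContDiffAt ℝ 2 ρ p) (hη : 1 < η) (hp : ρ p = 0)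
    (hspc : ∀ X : Fin n → ℂ, X ≠ 0 → dirDeriv X (cplx ρ) p = 0 → 0 < (levi ρ X X p).re) :
    ∀ᶠ z in 𝓝 p, 0 < ρ z → ∀ X : Fin n → ℂ, X ≠ 0 → 0 < leviRpowFactor ρ η z X := by
  have hsphere : ∀ᶠ z in 𝓝 p, ∀ X ∈ Metric.sphere (0 : Fin n → ℂ) 1,
      0 < ρ z → 0 < leviRpowFactor ρ η z X := by
    refine (isCompact_sphere 0 1).eventually_forall_of_forall_eventually fun X hX => ?_
    have hX0 : X ≠ 0 := ne_zero_of_mem_sphere one_ne_zero ⟨X, hX⟩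
    by_cases hd : dirDeriv X (cplx ρ) p = 0
    · have hlevi := (continuous_re.continuousAt.comp (continuousAt_levi hρ X)).eventually
        (eventually_gt_nhds (hspc X hX0 hd))
      filter_upwards [hlevi] with q hq hρq
      exact add_pos_of_nonneg_of_pos (mul_nonneg (sub_nonneg.2 hη.le) (normSq_nonneg _))
        (mul_pos hρq hq)
    · have hcont : ContinuousAt (fun q : (Fin n → ℂ) × (Fin n → ℂ) =>
          leviRpowFactor ρ η q.1 q.2) (p, X) := by
        have := continuousAt_dirDeriv (hρ.cplx.of_le one_le_two) X
        have := continuousAt_levi hρ X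
        have := hρ.continuousAt
        simp only [leviRpowFactor]
        fun_prop
      have hpos : 0 < leviRpowFactor ρ η p X := by
        simpa [leviRpowFactor, hp] using mul_pos (sub_pos.2 hη) (normSq_pos.2 hd)
      filter_upwards [hcont.eventually (eventually_gt_nhds hpos)] with q hq _ using hq
  filter_upwards [hsphere] with z hz hρz X hX
  have hXnorm : (‖X‖ : ℂ) ≠ 0 := ofReal_ne_zero.2 (norm_ne_zero_iff.2 hX)
  have hY : ((‖X‖ : ℂ)⁻¹ • X) ∈ Metric.sphere (0 : Fin n → ℂ) 1 := by
    simp [norm_smul, hX]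
  have hXY : X = (‖X‖ : ℂ) • ((‖X‖ : ℂ)⁻¹ • X) := by
    rw [smul_smul, mul_inv_cancel₀ hXnorm, one_smul]
  rw [hXY, leviRpowFactor_smul]
  exact mul_pos (normSq_pos.2 hXnorm) (hz _ hY hρz)

end StrongPseudoconvexity

theorem lemma_S4_general {n : ℕ} (Ω : Set (Fin n → ℂ))
    (V : Set (Fin n → ℂ)) (ρ : (Fin n → ℂ) → ℝ) (hdef : IsDefFn Ω V ρ)
    (η₂ : ℝ) (hη : 1 < η₂) :
    ∃ W : Set (Fin n → ℂ), IsOpen W ∧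
      {p ∈ frontier Ω | ∀ X : Fin n → ℂ, X ≠ 0 → dirDeriv X (cplx ρ) p = 0 →
        0 < (levi ρ X X p).re} ⊆ W ∧
      StrictPSHOn (fun z => ρ z ^ η₂) ((closure Ω)ᶜ ∩ W) := by
  refine ⟨interior {z | z ∈ V ∧ fderiv ℝ ρ z ≠ 0 ∧
      (0 < ρ z → ∀ X : Fin n → ℂ, X ≠ 0 → 0 < leviRpowFactor ρ η₂ z X)},
    isOpen_interior, fun p ⟨hp, hspc⟩ => mem_interior_iff_mem_nhds.2 ?_, ?_⟩
  · have hpV : p ∈ V := hdef.subset (frontier_subset_closure hp)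
    have hρp : ContDiffAt ℝ 2 ρ p := hdef.contDiffAt hpV 2
    filter_upwards [hdef.isOpen.mem_nhds hpV,
      (hρp.fderiv_right one_add_one_eq_two.le).continuousAt.eventually_ne (hdef.grad_ne p hp),
      eventually_leviRpowFactor_pos hρp hη (hdef.eq_zero_of_mem_frontier hp) hspc]
      with z hzV hgrad hpos using ⟨hzV, hgrad, hpos⟩
  · rintro z ⟨hzΩ, hzW⟩ X hX
    obtain ⟨hzV, hgrad, hpos⟩ := interior_subset hzW
    have hρz : 0 < ρ z := hdef.pos_of_notMem_closure hzV hzΩ hgrad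
    rw [levi_rpow_re (hdef.contDiffAt hzV 2) hρz]
    exact mul_pos (mul_pos (by linarith) (Real.rpow_pos_of_pos hρz _)) (hpos hρz X hX)

/-- Lemma 3.5: for any defining function `ρ` and any `η₂ ∈ (1,∞)`,
`ρ^{η₂}` is strictly plurisubharmonic outside `cl Ω` in a neighborhood of the set `Π` of
strongly pseudoconvex boundary points. -/
theorem lemma_S4 {n : ℕ} (hn : 2 ≤ n) (Ω : Set (Fin n → ℂ))
    (hΩ : IsOpen Ω) (hbd : Bornology.IsBounded Ω) (hpsc : IsPseudoconvex Ω)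
    (V : Set (Fin n → ℂ)) (ρ : (Fin n → ℂ) → ℝ) (hdef : IsDefFn Ω V ρ)
    (η₂ : ℝ) (hη : 1 < η₂) :
    ∃ W : Set (Fin n → ℂ), IsOpen W ∧
      {p ∈ frontier Ω | ∀ X : Fin n → ℂ, X ≠ 0 → dirDeriv X (cplx ρ) p = 0 →
        0 < (levi ρ X X p).re} ⊆ W ∧
      StrictPSHOn (fun z => ρ z ^ η₂) ((closure Ω)ᶜ ∩ W) :=
  lemma_S4_general Ω V ρ hdef η₂ hη
end
end

section
/- Let β > π/2 and α > 0, and set r₁ := e^{−(β/2 − π/4)} and r₂ := e^{β/2 − π/4}. If there exists a continuously differentiable function s : [r₁, r₂] → ℝ such that −s′(r) + α·s(r)² − s(r)/r + 4α/r² ≤ 0 for all r ∈ [r₁, r₂], then α·(β − π/2) < π/2. -/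
/-!
In the logarithmic variable `t = log r` the quantity `g = r s / 2` satisfies the Riccati
inequality `g' ≥ 2α (1 + g²)`, so `arctan g` grows at rate at least `2α`. Over the interval
`t ∈ [-(β/2 - π/4), β/2 - π/4]` of length `β - π/2` it therefore increases by at least
`2α (β - π/2)`, while `arctan` takes values in `(-π/2, π/2)`.
-/

open Real Set

theorem mul_sub_lt_pi_of_mul_one_add_sq_le_deriv {g g' : ℝ → ℝ} {a b c : ℝ} (hab : a ≤ b)
    (hg : ContinuousOn g (Icc a b)) (hg' : ∀ t ∈ Ioo a b, HasDerivAt g (g' t) t)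
    (hriccati : ∀ t ∈ Ioo a b, c * (1 + g t ^ 2) ≤ g' t) :
    c * (b - a) < π := by
  have harctan : ∀ t ∈ Ioo a b,
      HasDerivAt (fun u => arctan (g u)) (1 / (1 + g t ^ 2) * g' t) t :=
    fun t ht => (hg' t ht).arctan
  have hgrowth : c * (b - a) ≤ arctan (g b) - arctan (g a) := by
    refine (convex_Icc a b).mul_sub_le_image_sub_of_le_deriv
      (continuous_arctan.comp_continuousOn hg) ?_ ?_ a (left_mem_Icc.2 hab) b
      (right_mem_Icc.2 hab) hab
    · rw [interior_Icc]
      exact fun t ht => (harctan t ht).differentiableAt.differentiableWithinAt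
    · rw [interior_Icc]
      intro t ht
      change c ≤ deriv (fun u => arctan (g u)) t
      rw [(harctan t ht).deriv, one_div, inv_mul_eq_div, le_div_iff₀ (by positivity)]
      exact hriccati t ht
  linarith [arctan_lt_pi_div_two (g b), neg_pi_div_two_lt_arctan (g a)]

theorem mul_sq_add_four_le_of_riccati {α r s s' : ℝ} (hr : 0 < r)
    (h : -s' + α * s ^ 2 - s / r + 4 * α / r ^ 2 ≤ 0) :
    α * ((r * s) ^ 2 + 4) ≤ r * s + r ^ 2 * s' := by
  have hscaled := mul_nonpos_of_nonneg_of_nonpos (sq_nonneg r) h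
  have hexpand : r ^ 2 * (-s' + α * s ^ 2 - s / r + 4 * α / r ^ 2)
      = -(r ^ 2 * s') + α * (r * s) ^ 2 - r * s + 4 * α := by
    field_simp
  linarith

theorem hasDerivAt_exp_mul_comp_exp {s : ℝ → ℝ} {d t : ℝ} (hs : HasDerivAt s d (exp t)) :
    HasDerivAt (fun u => exp u * s (exp u)) (exp t * s (exp t) + exp t ^ 2 * d) t := by
  have h : HasDerivAt (fun u => exp u * s (exp u)) _ t :=
    (hasDerivAt_exp t).mul (hs.comp t (hasDerivAt_exp t))
  exact h.congr_deriv (by ring)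

theorem riccati_comparison_worm_general (β α : ℝ) (hβ : Real.pi / 2 < β)
    (s s' : ℝ → ℝ)
    (hderiv : ∀ r ∈ Set.Icc (Real.exp (-(β / 2 - Real.pi / 4)))
        (Real.exp (β / 2 - Real.pi / 4)),
      HasDerivWithinAt s (s' r)
        (Set.Icc (Real.exp (-(β / 2 - Real.pi / 4))) (Real.exp (β / 2 - Real.pi / 4))) r)
    (hineq : ∀ r ∈ Set.Icc (Real.exp (-(β / 2 - Real.pi / 4)))
        (Real.exp (β / 2 - Real.pi / 4)),
      -s' r + α * s r ^ 2 - s r / r + 4 * α / r ^ 2 ≤ 0) :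
    α * (β - Real.pi / 2) < Real.pi / 2 := by
  set L := β / 2 - π / 4 with hL
  have hexp_mem : ∀ t ∈ Icc (-L) L, exp t ∈ Icc (exp (-L)) (exp L) :=
    fun t ht => ⟨exp_le_exp.2 ht.1, exp_le_exp.2 ht.2⟩
  have hs : ContinuousOn s (Icc (exp (-L)) (exp L)) := fun r hr =>
    (hderiv r hr).continuousWithinAt
  have hcont : ContinuousOn (fun t => exp t * s (exp t) / 2) (Icc (-L) L) :=
    (continuous_exp.continuousOn.mul (hs.comp continuous_exp.continuousOn hexp_mem)).div_const 2
  have hg' : ∀ t ∈ Ioo (-L) L, HasDerivAt (fun t => exp t * s (exp t) / 2)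
      ((exp t * s (exp t) + exp t ^ 2 * s' (exp t)) / 2) t := fun t ht => by
    have hmem : exp t ∈ Ioo (exp (-L)) (exp L) := ⟨exp_lt_exp.2 ht.1, exp_lt_exp.2 ht.2⟩
    exact (hasDerivAt_exp_mul_comp_exp ((hderiv _ (Ioo_subset_Icc_self hmem)).hasDerivAt
      (Icc_mem_nhds hmem.1 hmem.2))).div_const 2
  have hriccati : ∀ t ∈ Ioo (-L) L, 2 * α * (1 + (exp t * s (exp t) / 2) ^ 2) ≤
      (exp t * s (exp t) + exp t ^ 2 * s' (exp t)) / 2 := fun t ht => by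
    have := mul_sq_add_four_le_of_riccati (exp_pos t)
      (hineq _ (hexp_mem t (Ioo_subset_Icc_self ht)))
    linarith
  have hlength := mul_sub_lt_pi_of_mul_one_add_sq_le_deriv (by linarith [hL]) hcont hg' hriccati
  have hwidth : β - π / 2 = L - -L := by rw [hL]; ring
  rw [hwidth]
  linarith

/-- if a C¹ function `s` on `[e^{−(β/2−π/4)}, e^{β/2−π/4}]` satisfies the
differential inequality `−s′ + α s² − s/r + 4α/r² ≤ 0` there, then `α(β − π/2) < π/2`. -/
theorem riccati_comparison_worm (β α : ℝ) (hβ : Real.pi / 2 < β) (hα : 0 < α)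
    (s s' : ℝ → ℝ)
    (hderiv : ∀ r ∈ Set.Icc (Real.exp (-(β / 2 - Real.pi / 4)))
        (Real.exp (β / 2 - Real.pi / 4)),
      HasDerivWithinAt s (s' r)
        (Set.Icc (Real.exp (-(β / 2 - Real.pi / 4))) (Real.exp (β / 2 - Real.pi / 4))) r)
    (hcont : ContinuousOn s' (Set.Icc (Real.exp (-(β / 2 - Real.pi / 4)))
        (Real.exp (β / 2 - Real.pi / 4))))
    (hineq : ∀ r ∈ Set.Icc (Real.exp (-(β / 2 - Real.pi / 4)))
        (Real.exp (β / 2 - Real.pi / 4)),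
      -s' r + α * s r ^ 2 - s r / r + 4 * α / r ^ 2 ≤ 0) :
    α * (β - Real.pi / 2) < Real.pi / 2 :=
  riccati_comparison_worm_general β α hβ s s' hderiv hineq
end
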